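/- Let D ⊂ ℝ^d be compact and convex and ν a probability measure on D absolutely continuous with respect to Lebesgue measure. Let (ε_N) ⊂ ℝ₊ with ε_N → 0, and let (X^N, g^N) be tuples of n pairwise distinct sites and weights converging to (X, g) where X is a tuple of pairwise distinct sites. Then, for each i, χ_i^{ε_N}[X^N, g^N] converges in L¹(ν) to the indicator function χ_{L_i[X,g]} of the Laguerre cell. -/

import Mathlib

open MeasureTheory Set Filter Topology
open scoped ENNReal NNReal

noncomputable section

/-- Euclidean space `ℝ^d`. -/
abbrev Euc (d : ℕ) : Type := EuclideanSpace ℝ (Fin d)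

/-- `ρ ⪯ μ` in the convex order: `∫ ψ dρ ≤ ∫ ψ dμ` for every convex function `ψ` for which
both integrals exist. -/
def ConvexOrderLE {d : ℕ} (ρ μ : Measure (Euc d)) : Prop :=
  ∀ ψ : Euc d → ℝ, ConvexOn ℝ Set.univ ψ → Integrable ψ μ → Integrable ψ ρ →
    ∫ x, ψ x ∂ρ ≤ ∫ x, ψ x ∂μ

/-- The set of fusions of `ν`: probability measures supported on `D` that are dominated by `ν`
in the convex order. -/
def fusions {d : ℕ} (D : Set (Euc d)) (ν : Measure (Euc d)) : Set (Measure (Euc d)) :=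
  {ρ | IsProbabilityMeasure ρ ∧ ρ Dᶜ = 0 ∧ ConvexOrderLE ρ ν}

/-- The (topological) support of a measure. -/
def msupport {d : ℕ} (ρ : Measure (Euc d)) : Set (Euc d) := {x | ∀ U ∈ nhds x, ρ U ≠ 0}

/-- Laguerre cell of site `x_i` with weight `g_i` inside the domain `D`. -/
def LaguerreCell {d n : ℕ} (D : Set (Euc d)) (X : Fin n → Euc d) (g : Fin n → ℝ)
    (i : Fin n) : Set (Euc d) :=
  {y ∈ D | ∀ j, ‖y - X i‖ ^ 2 - g i ≤ ‖y - X j‖ ^ 2 - g j}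

/-- ν-mass of the `i`-th Laguerre cell. -/
def cellMass {d n : ℕ} (D : Set (Euc d)) (ν : Measure (Euc d)) (X : Fin n → Euc d)
    (g : Fin n → ℝ) (i : Fin n) : ℝ :=
  (ν (LaguerreCell D X g i)).toReal

/-- ν-barycenter of the `i`-th Laguerre cell. -/
def cellBary {d n : ℕ} (D : Set (Euc d)) (ν : Measure (Euc d)) (X : Fin n → Euc d)
    (g : Fin n → ℝ) (i : Fin n) : Euc d :=
  (cellMass D ν X g i)⁻¹ • ∫ y in LaguerreCell D X g i, y ∂ν

/-- Entropy-regularized cell function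
`χ_i^ε[X,g](y) = exp((g_i − |y−x_i|²)/ε) / Σ_j exp((g_j − |y−x_j|²)/ε)`. -/
def chiEps {d n : ℕ} (X : Fin n → Euc d) (g : Fin n → ℝ) (ε : ℝ) (i : Fin n)
    (y : Euc d) : ℝ :=
  Real.exp ((g i - ‖y - X i‖ ^ 2) / ε) / ∑ j, Real.exp ((g j - ‖y - X j‖ ^ 2) / ε)

/-- Regularized mass `m_i^ε[X,g] = ∫ χ_i^ε[X,g] dν`. -/
def mEps {d n : ℕ} (ν : Measure (Euc d)) (X : Fin n → Euc d) (g : Fin n → ℝ) (ε : ℝ)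
    (i : Fin n) : ℝ :=
  ∫ y, chiEps X g ε i y ∂ν

/-- Regularized barycenter `b_i^ε[X,g] = (m_i^ε)⁻¹ ∫ y χ_i^ε[X,g](y) dν(y)`. -/
def bEps {d n : ℕ} (ν : Measure (Euc d)) (X : Fin n → Euc d) (g : Fin n → ℝ) (ε : ℝ)
    (i : Fin n) : Euc d :=
  (mEps ν X g ε i)⁻¹ • ∫ y, chiEps X g ε i y • y ∂ν

/-! Off the ties of the limiting power functions `g_j - ‖y - X_j‖²` (finitely many affine
hyperplanes, so a Lebesgue-null and hence `ν`-null set) and on `D`, these power functions have a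
strict maximiser `j₀`, and `χ_i^{ε_N}[X^N, g^N](y)` is the softmax of the convergent values
`g^N_j - ‖y - X^N_j‖²` at temperature `ε_N → 0`, which concentrates on `j₀`. That is exactly the
indicator of `L_i[X, g]` at `y`. Everything takes values in `[0, 1]`, so dominated convergence
upgrades this `ν`-a.e. convergence to convergence in `L¹(ν)`. -/

open scoped InnerProductSpace

section AddHaar

variable {E : Type*} [NormedAddCommGroup E] [InnerProductSpace ℝ E] [FiniteDimensional ℝ E]
  [MeasurableSpace E] [BorelSpace E]

theorem addHaar_setOf_inner_eq (μ : Measure E) [μ.IsAddHaarMeasure] {v : E} (hv : v ≠ 0)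
    (c : ℝ) : μ {y | ⟪v, y⟫_ℝ = c} = 0 := by
  let s := (affineSpan ℝ {c}).comap (innerₛₗ ℝ v).toAffineMap
  have hs : (s : Set E) = {y | ⟪v, y⟫_ℝ = c} := by
    ext y
    simp [s, AffineSubspace.coe_comap, AffineSubspace.coe_affineSpan_singleton]
  rw [← hs]
  refine Measure.addHaar_affineSubspace μ s fun htop => hv ?_
  have h0 : (0 : E) ∈ s := htop ▸ AffineSubspace.mem_top ℝ E 0
  have h1 : v ∈ s := htop ▸ AffineSubspace.mem_top ℝ E v
  rw [← SetLike.mem_coe, hs] at h0 h1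
  simp only [mem_ofPred_eq, inner_zero_right, real_inner_self_eq_norm_sq] at h0 h1
  simpa [← h0] using h1

-- The two power functions tie on the hyperplane `2⟪q - p, y⟫ = a - b + ‖q‖² - ‖p‖²`.
theorem addHaar_setOf_sub_sq_dist_eq (μ : Measure E) [μ.IsAddHaarMeasure] {p q : E}
    (hpq : p ≠ q) (a b : ℝ) : μ {y | a - ‖y - p‖ ^ 2 = b - ‖y - q‖ ^ 2} = 0 := by
  convert addHaar_setOf_inner_eq μ (sub_ne_zero.2 hpq.symm)
    ((a - b + ‖q‖ ^ 2 - ‖p‖ ^ 2) / 2) using 2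
  ext y
  rw [mem_ofPred_eq, mem_ofPred_eq, norm_sub_sq_real, norm_sub_sq_real, inner_sub_left,
    real_inner_comm q, real_inner_comm p]
  constructor <;> intro h <;> linarith

theorem ae_pairwise_sub_sq_dist_ne {ι : Type*} [Countable ι] {μ ν : Measure E}
    [μ.IsAddHaarMeasure] (hνμ : ν ≪ μ) {X : ι → E} (hX : Function.Injective X) (g : ι → ℝ) :
    ∀ᵐ y ∂ν, Pairwise fun j k => g j - ‖y - X j‖ ^ 2 ≠ g k - ‖y - X k‖ ^ 2 := by
  refine hνμ.ae_le (ae_all_iff.2 fun j => ae_all_iff.2 fun k => ?_)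
  by_cases hjk : j = k
  · exact Eventually.of_forall fun _ h => (h hjk).elim
  · exact (measure_eq_zero_iff_ae_notMem.1
      (addHaar_setOf_sub_sq_dist_eq μ (hX.ne hjk) (g j) (g k))).mono fun _ hy _ => hy

end AddHaar

section Softmax

variable {α ι : Type*} {l : Filter α}

theorem tendsto_exp_div_nhdsGT_zero {u ε : α → ℝ} {c : ℝ} (hu : Tendsto u l (𝓝 c)) (hc : c < 0)
    (hε : Tendsto ε l (𝓝[>] 0)) : Tendsto (fun x => Real.exp (u x / ε x)) l (𝓝 0) :=
  Real.tendsto_exp_atBot.comp (hu.neg_mul_atTop hc hε.inv_tendsto_nhdsGT_zero)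

variable [Fintype ι] {a : α → ι → ℝ} {b : ι → ℝ} {ε : α → ℝ}

theorem sum_exp_div_sum_exp (u : ι → ℝ) (i₀ : ι) :
    ∑ i, Real.exp (u i) / ∑ j, Real.exp (u j) = 1 := by
  rw [← Finset.sum_div, div_self]
  exact (Finset.sum_pos (fun j _ => Real.exp_pos (u j)) ⟨i₀, Finset.mem_univ i₀⟩).ne'

theorem tendsto_exp_div_sum_exp_of_lt (ha : ∀ j, Tendsto (fun x => a x j) l (𝓝 (b j)))
    (hε : Tendsto ε l (𝓝[>] 0)) {i j₀ : ι} (hlt : b i < b j₀) :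
    Tendsto (fun x => Real.exp (a x i / ε x) / ∑ j, Real.exp (a x j / ε x)) l (𝓝 0) := by
  have hdom : ∀ x, Real.exp (a x i / ε x) / ∑ j, Real.exp (a x j / ε x)
      ≤ Real.exp ((a x i - a x j₀) / ε x) := fun x => by
    rw [sub_div, Real.exp_sub]
    gcongr
    exact Finset.single_le_sum (f := fun j => Real.exp (a x j / ε x))
      (fun j _ => (Real.exp_pos _).le) (Finset.mem_univ j₀)
  exact tendsto_of_tendsto_of_tendsto_of_le_of_le tendsto_const_nhds
    (tendsto_exp_div_nhdsGT_zero ((ha i).sub (ha j₀)) (sub_neg.2 hlt) hε)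
    (fun x => by positivity) hdom

theorem tendsto_exp_div_sum_exp [DecidableEq ι]
    (ha : ∀ j, Tendsto (fun x => a x j) l (𝓝 (b j))) (hε : Tendsto ε l (𝓝[>] 0)) {j₀ : ι}
    (hmax : ∀ j ≠ j₀, b j < b j₀) (i : ι) :
    Tendsto (fun x => Real.exp (a x i / ε x) / ∑ j, Real.exp (a x j / ε x)) l
      (𝓝 (if i = j₀ then 1 else 0)) := by
  split_ifs with hi
  · subst hi
    have hrest := tendsto_finsetSum (Finset.univ.erase i) fun j hj =>
      tendsto_exp_div_sum_exp_of_lt ha hε (hmax j (Finset.ne_of_mem_erase hj))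
    convert (tendsto_const_nhds (x := (1 : ℝ))).sub hrest using 2 with x
    · rw [Finset.sum_erase_eq_sub (Finset.mem_univ i), sum_exp_div_sum_exp _ i]
      ring
    · simp
  · exact tendsto_exp_div_sum_exp_of_lt ha hε (hmax i hi)

end Softmax

section Laguerre

variable {d n : ℕ}

theorem chiEps_nonneg (X : Fin n → Euc d) (g : Fin n → ℝ) (ε : ℝ) (i : Fin n) (y : Euc d) :
    0 ≤ chiEps X g ε i y := by
  unfold chiEps
  positivity

theorem chiEps_le_one (X : Fin n → Euc d) (g : Fin n → ℝ) (ε : ℝ) (i : Fin n) (y : Euc d) :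
    chiEps X g ε i y ≤ 1 := by
  refine div_le_one_of_le₀ ?_ (by positivity)
  exact Finset.single_le_sum (f := fun j => Real.exp ((g j - ‖y - X j‖ ^ 2) / ε))
    (fun j _ => (Real.exp_pos _).le) (Finset.mem_univ i)

theorem continuous_chiEps (X : Fin n → Euc d) (g : Fin n → ℝ) (ε : ℝ) (i : Fin n) :
    Continuous (chiEps X g ε i) := by
  refine Continuous.div (by fun_prop) (by fun_prop) fun y => ?_
  exact (Finset.sum_pos (fun j _ => Real.exp_pos _) ⟨i, Finset.mem_univ i⟩).ne'

theorem nullMeasurableSet_laguerreCell {D : Set (Euc d)} {ν : Measure (Euc d)} (hνD : ν Dᶜ = 0)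
    (X : Fin n → Euc d) (g : Fin n → ℝ) (i : Fin n) :
    NullMeasurableSet (LaguerreCell D X g i) ν := by
  have hD : NullMeasurableSet D ν := by simpa using (NullMeasurableSet.of_null hνD).compl
  have hclosed : IsClosed {y : Euc d | ∀ j, ‖y - X i‖ ^ 2 - g i ≤ ‖y - X j‖ ^ 2 - g j} := by
    rw [ofPred_forall]
    exact isClosed_iInter fun j => isClosed_le (by fun_prop) (by fun_prop)
  exact hD.inter hclosed.nullMeasurableSet

theorem mem_laguerreCell_iff_of_forall_lt {D : Set (Euc d)} {X : Fin n → Euc d} {g : Fin n → ℝ}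
    {y : Euc d} (hyD : y ∈ D) {j₀ : Fin n}
    (hmax : ∀ j ≠ j₀, g j - ‖y - X j‖ ^ 2 < g j₀ - ‖y - X j₀‖ ^ 2) (i : Fin n) :
    y ∈ LaguerreCell D X g i ↔ i = j₀ := by
  refine ⟨fun hy => by_contra fun hi => ?_, fun hi => ⟨hyD, fun j => ?_⟩⟩
  · linarith [hy.2 j₀, hmax i hi]
  · subst hi
    rcases eq_or_ne j i with rfl | hj
    · rfl
    · linarith [hmax j hj]

theorem tendsto_chiEps_indicator_laguerreCell {α : Type*} {l : Filter α} {D : Set (Euc d)}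
    {XN : α → Fin n → Euc d} {gN : α → Fin n → ℝ} {ε : α → ℝ} {X : Fin n → Euc d}
    {g : Fin n → ℝ} (hXconv : ∀ j, Tendsto (fun N => XN N j) l (𝓝 (X j)))
    (hgconv : ∀ j, Tendsto (fun N => gN N j) l (𝓝 (g j))) (hε : Tendsto ε l (𝓝[>] 0))
    {y : Euc d} (hyD : y ∈ D)
    (hties : Pairwise fun j k => g j - ‖y - X j‖ ^ 2 ≠ g k - ‖y - X k‖ ^ 2) (i : Fin n) :
    Tendsto (fun N => chiEps (XN N) (gN N) (ε N) i y) l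
      (𝓝 ((LaguerreCell D X g i).indicator 1 y)) := by
  obtain ⟨j₀, -, hj₀⟩ := Finset.exists_max_image Finset.univ
    (fun j => g j - ‖y - X j‖ ^ 2) ⟨i, Finset.mem_univ i⟩
  have hmax : ∀ j ≠ j₀, g j - ‖y - X j‖ ^ 2 < g j₀ - ‖y - X j₀‖ ^ 2 :=
    fun j hj => (hj₀ j (Finset.mem_univ j)).lt_of_ne (hties hj)
  have hlim := tendsto_exp_div_sum_exp
    (a := fun N j => gN N j - ‖y - XN N j‖ ^ 2)
    (fun j => (hgconv j).sub ((tendsto_const_nhds.sub (hXconv j)).norm.pow 2)) hε hmax i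
  have hind : (LaguerreCell D X g i).indicator 1 y = if i = j₀ then (1 : ℝ) else 0 := by
    have hmem := mem_laguerreCell_iff_of_forall_lt hyD hmax i
    by_cases hi : i = j₀
    · rw [if_pos hi, indicator_of_mem (hmem.2 hi), Pi.one_apply]
    · rw [if_neg hi, indicator_of_notMem (mt hmem.1 hi)]
  rw [hind]
  exact hlim

end Laguerre

theorem chiEps_L1_convergence_of_tendsto_general
    {d : ℕ} (D : Set (Euc d))
    (ν : Measure (Euc d)) [IsProbabilityMeasure ν] (hνD : ν Dᶜ = 0)
    (hac : ν ≪ (volume : Measure (Euc d)))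
    {n : ℕ}
    (ε : ℕ → ℝ) (hεpos : ∀ N, 0 < ε N) (hε : Tendsto ε atTop (𝓝 0))
    (XN : ℕ → Fin n → Euc d) (gN : ℕ → Fin n → ℝ)
    (X : Fin n → Euc d) (hX : Function.Injective X) (g : Fin n → ℝ)
    (hXconv : ∀ i, Tendsto (fun N => XN N i) atTop (𝓝 (X i)))
    (hgconv : ∀ i, Tendsto (fun N => gN N i) atTop (𝓝 (g i))) :
    ∀ i, Tendsto
      (fun N => ∫ y,
        |chiEps (XN N) (gN N) (ε N) i y -
          (LaguerreCell D X g i).indicator (1 : Euc d → ℝ) y| ∂ν)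
      atTop (𝓝 0) := by
  intro i
  have hε' : Tendsto ε atTop (𝓝[>] 0) := tendsto_nhdsWithin_iff.2 ⟨hε, .of_forall hεpos⟩
  have hlim : ∀ᵐ y ∂ν, Tendsto (fun N => chiEps (XN N) (gN N) (ε N) i y) atTop
      (𝓝 ((LaguerreCell D X g i).indicator 1 y)) := by
    filter_upwards [ae_pairwise_sub_sq_dist_ne hac hX g, mem_ae_iff.2 hνD] with y hties hyD
    exact tendsto_chiEps_indicator_laguerreCell hXconv hgconv hε' hyD hties i
  have hmeas : AEStronglyMeasurable ((LaguerreCell D X g i).indicator (1 : Euc d → ℝ)) ν :=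
    aestronglyMeasurable_const.indicator₀ (nullMeasurableSet_laguerreCell hνD X g i)
  rw [← integral_zero (Euc d) ℝ]
  refine tendsto_integral_of_dominated_convergence (fun _ => 1)
    (fun N => ((continuous_chiEps _ _ _ i).aestronglyMeasurable.sub hmeas).norm)
    (integrable_const 1) (fun N => .of_forall fun y => ?_)
    (hlim.mono fun y hy => tendsto_iff_norm_sub_tendsto_zero.1 hy)
  rw [norm_abs_eq_norm, Real.norm_eq_abs]
  exact abs_sub_le_of_nonneg_of_le (chiEps_nonneg _ _ _ i y) (chiEps_le_one _ _ _ i y)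
    (indicator_nonneg (fun _ _ => zero_le_one) y) (indicator_le_self' (fun _ _ => zero_le_one) y)

/-- Proposition on joint convergence: if `ε_N → 0`, `ε_N > 0`, and
`(X^N, g^N) → (X, g)` with all tuples of pairwise distinct sites, then
`χ_i^{ε_N}[X^N, g^N] → χ_{L_i[X,g]}` in `L¹(ν)` for every `i`. -/
theorem chiEps_L1_convergence_of_tendsto
    {d : ℕ} (D : Set (Euc d)) (hD : IsCompact D) (hDconv : Convex ℝ D)
    (ν : Measure (Euc d)) [IsProbabilityMeasure ν] (hνD : ν Dᶜ = 0)
    (hac : ν ≪ (volume : Measure (Euc d)))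
    {n : ℕ} (hn : 0 < n)
    (ε : ℕ → ℝ) (hεpos : ∀ N, 0 < ε N) (hε : Tendsto ε atTop (𝓝 0))
    (XN : ℕ → Fin n → Euc d) (gN : ℕ → Fin n → ℝ)
    (hXN : ∀ N, Function.Injective (XN N))
    (X : Fin n → Euc d) (hX : Function.Injective X) (g : Fin n → ℝ)
    (hXconv : ∀ i, Tendsto (fun N => XN N i) atTop (𝓝 (X i)))
    (hgconv : ∀ i, Tendsto (fun N => gN N i) atTop (𝓝 (g i))) :
    ∀ i, Tendsto
      (fun N => ∫ y,
        |chiEps (XN N) (gN N) (ε N) i y -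
          (LaguerreCell D X g i).indicator (1 : Euc d → ℝ) y| ∂ν)
      atTop (𝓝 0) :=
  chiEps_L1_convergence_of_tendsto_general D ν hνD hac ε hεpos hε XN gN X hX g hXconv hgconv
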